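/- arXiv:1511.04111 — 3 statements merged into one kernel-verified Lean document; each statement's English description precedes it below -/
import Mathlib

section
/- Let ≤ be the partial order on Bool^k (true = ∧, false = ∨) generated by the following covering relations making μ smaller than λ: (i) for some i < k, λ has (∧,∨) at positions (i, i+1) and μ is obtained from λ by replacing this pair with (∨,∧); (ii) λ has (∨,∨) at positions (1,2) and μ is obtained by replacing this pair with (∧,∧). Then for any positions i < j (not necessarily adjacent): if λ_i = ∧ and λ_j = ∨, the sequence obtained by setting position i to ∨ and position j to ∧ is strictly smaller than λ; and if λ_i = λ_j = ∨, the sequence obtained by setting both positions i and j to ∧ is strictly smaller than λ. -/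
/-- One decreasing basic linkage move on diagrammatic weights of length `k`
(`true = ∧`, `false = ∨`): `bruhatStep k μ λ` holds iff `μ` is obtained from `λ` either
by replacing an adjacent pair `(∧,∨)` at positions `(i,i+1)` by `(∨,∧)`, or by replacing
the pair `(∨,∨)` at the first two positions by `(∧,∧)`. -/
def bruhatStep (k : ℕ) (μ lam : Fin k → Bool) : Prop :=
  (∃ i j : Fin k, (i : ℕ) + 1 = (j : ℕ) ∧ lam i = true ∧ lam j = false ∧
    μ = Function.update (Function.update lam i false) j true) ∨
  (∃ i j : Fin k, (i : ℕ) = 0 ∧ (j : ℕ) = 1 ∧ lam i = false ∧ lam j = false ∧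
    μ = Function.update (Function.update lam i true) j true)

open Function Relation

lemma step_swap {k : ℕ} (lam : Fin k → Bool) (i j : Fin k) (h : (i:ℕ)+1 = (j:ℕ))
    (hi : lam i = true) (hj : lam j = false) :
    bruhatStep k (update (update lam i false) j true) lam :=
  Or.inl ⟨i, j, h, hi, hj, rfl⟩

lemma swap_chain : ∀ d : ℕ, ∀ {k : ℕ} (lam : Fin k → Bool) (i j : Fin k),
    (j:ℕ) = (i:ℕ) + d + 1 → lam i = true → lam j = false →
    Relation.ReflTransGen (bruhatStep k) (update (update lam i false) j true) lam := by
  intro d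
  induction d with
  | zero =>
    intro k lam i j h hi hj
    exact ReflTransGen.single (step_swap lam i j (by omega) hi hj)
  | succ d ih =>
    intro k lam i j h hi hj
    have hi1k : (i:ℕ) + 1 < k := by have := j.isLt; omega
    have hv1 : ((⟨(i:ℕ)+1, hi1k⟩ : Fin k) : ℕ) = (i:ℕ)+1 := rfl
    generalize hi1def : (⟨(i:ℕ)+1, hi1k⟩ : Fin k) = i1 at hv1
    have hii1 : i ≠ i1 := Fin.ne_of_val_ne (by omega)
    have hi1j : i1 ≠ j := Fin.ne_of_val_ne (by omega)
    have hij : i ≠ j := Fin.ne_of_val_ne (by omega)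
    cases hb : lam i1 with
    | true =>
      have chain1 := ih lam i1 j (by omega) hb hj
      have h1i : (update (update lam i1 false) j true) i = true := by
        simp [Function.update_apply, hij, hii1, hi]
      have h1i1 : (update (update lam i1 false) j true) i1 = false := by
        simp [Function.update_apply, hi1j]
      have step := step_swap (update (update lam i1 false) j true) i i1
        (by omega) h1i h1i1
      have heq : update (update (update (update lam i1 false) j true) i false) i1 true
          = update (update lam i false) j true := by
        funext x
        simp only [Function.update_apply]
        by_cases hx1 : x = i1 <;> by_cases hx2 : x = i <;> by_cases hx3 : x = j <;>
          simp_all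
      exact heq ▸ ((ReflTransGen.single step).trans chain1)
    | false =>
      have step := step_swap lam i i1 (by omega) hi hb
      have h1i1 : (update (update lam i false) i1 true) i1 = true := by
        simp [Function.update_apply]
      have h1j : (update (update lam i false) i1 true) j = false := by
        simp [Function.update_apply, Ne.symm hi1j, Ne.symm hij, hj]
      have chain1 := ih (update (update lam i false) i1 true) i1 j (by omega) h1i1 h1j
      have heq : update (update (update (update lam i false) i1 true) i1 false) j true
          = update (update lam i false) j true := by
        funext x
        simp only [Function.update_apply]
        by_cases hx1 : x = i1 <;> by_cases hx2 : x = i <;> by_cases hx3 : x = j <;>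
          simp_all
      exact heq ▸ (chain1.trans (ReflTransGen.single step))

lemma up_chain : ∀ n : ℕ, ∀ {k : ℕ} (lam : Fin k → Bool) (i j : Fin k),
    (i:ℕ) < (j:ℕ) → (i:ℕ) + (j:ℕ) = n → lam i = false → lam j = false →
    Relation.ReflTransGen (bruhatStep k) (update (update lam i true) j true) lam := by
  intro n
  induction n using Nat.strong_induction_on with
  | _ n ih =>
    intro k lam i j hlt hn hi hj
    rcases Nat.eq_zero_or_pos (i:ℕ) with hi0 | hipos
    · rcases Nat.lt_or_ge (j:ℕ) 2 with hj2 | hj2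
      · exact ReflTransGen.single (Or.inr ⟨i, j, hi0, by omega, hi, hj, rfl⟩)
      · -- i = 0, j ≥ 2
        have hj0k : (j:ℕ) - 1 < k := by have := j.isLt; omega
        have hv : ((⟨(j:ℕ)-1, hj0k⟩ : Fin k) : ℕ) = (j:ℕ)-1 := rfl
        generalize hj0def : (⟨(j:ℕ)-1, hj0k⟩ : Fin k) = j0 at hv
        have hij0 : i ≠ j0 := Fin.ne_of_val_ne (by omega)
        have hj0j : j0 ≠ j := Fin.ne_of_val_ne (by omega)
        have hij : i ≠ j := Fin.ne_of_val_ne (by omega)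
        cases hb : lam j0 with
        | false =>
          have chain1 := ih ((i:ℕ)+(j0:ℕ)) (by omega) lam i j0 (by omega) rfl hi hb
          have hn1j0 : (update (update lam i true) j0 true) j0 = true := by
            simp [Function.update_apply]
          have hn1j : (update (update lam i true) j0 true) j = false := by
            simp [Function.update_apply, Ne.symm hj0j, Ne.symm hij, hj]
          have step := step_swap (update (update lam i true) j0 true) j0 j
            (by omega) hn1j0 hn1j
          have heq : update (update (update (update lam i true) j0 true) j0 false) j true
              = update (update lam i true) j true := by
            clear ih
            funext x
            simp only [Function.update_apply]
            by_cases hx1 : x = j0 <;> by_cases hx2 : x = i <;> by_cases hx3 : x = j <;>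
              simp_all
          exact heq ▸ ((ReflTransGen.single step).trans chain1)
        | true =>
          have step := step_swap lam j0 j (by omega) hb hj
          have h1i : (update (update lam j0 false) j true) i = false := by
            simp [Function.update_apply, hij, hij0, hi]
          have h1j0 : (update (update lam j0 false) j true) j0 = false := by
            simp [Function.update_apply, hj0j]
          have chain1 := ih ((i:ℕ)+(j0:ℕ)) (by omega)
            (update (update lam j0 false) j true) i j0 (by omega) rfl h1i h1j0
          have heq : update (update (update (update lam j0 false) j true) i true) j0 true
              = update (update lam i true) j true := by
            clear ih
            funext x
            simp only [Function.update_apply]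
            by_cases hx1 : x = j0 <;> by_cases hx2 : x = i <;> by_cases hx3 : x = j <;>
              simp_all
          exact heq ▸ (chain1.trans (ReflTransGen.single step))
    · -- i ≥ 1
      have hi0k : (i:ℕ) - 1 < k := by have := i.isLt; omega
      have hv : ((⟨(i:ℕ)-1, hi0k⟩ : Fin k) : ℕ) = (i:ℕ)-1 := rfl
      generalize hi0def : (⟨(i:ℕ)-1, hi0k⟩ : Fin k) = i0 at hv
      have hi0i : i0 ≠ i := Fin.ne_of_val_ne (by omega)
      have hi0j : i0 ≠ j := Fin.ne_of_val_ne (by omega)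
      have hij : i ≠ j := Fin.ne_of_val_ne (by omega)
      cases hb : lam i0 with
      | true =>
        have step := step_swap lam i0 i (by omega) hb hi
        have h1i0 : (update (update lam i0 false) i true) i0 = false := by
          simp [Function.update_apply, hi0i]
        have h1j : (update (update lam i0 false) i true) j = false := by
          simp [Function.update_apply, Ne.symm hij, Ne.symm hi0j, hj]
        have chain1 := ih ((i0:ℕ)+(j:ℕ)) (by omega)
          (update (update lam i0 false) i true) i0 j (by omega) rfl h1i0 h1j
        have heq : update (update (update (update lam i0 false) i true) i0 true) j true
            = update (update lam i true) j true := by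
          clear ih
          funext x
          simp only [Function.update_apply]
          by_cases hx1 : x = i0 <;> by_cases hx2 : x = i <;> by_cases hx3 : x = j <;>
            simp_all
        exact heq ▸ (chain1.trans (ReflTransGen.single step))
      | false =>
        have chain1 := ih ((i0:ℕ)+(j:ℕ)) (by omega) lam i0 j (by omega) rfl hb hj
        have hn1i0 : (update (update lam i0 true) j true) i0 = true := by
          simp [Function.update_apply, hi0j]
        have hn1i : (update (update lam i0 true) j true) i = false := by
          simp [Function.update_apply, hij, Ne.symm hi0i, hi]
        have step := step_swap (update (update lam i0 true) j true) i0 i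
          (by omega) hn1i0 hn1i
        have heq : update (update (update (update lam i0 true) j true) i0 false) i true
            = update (update lam i true) j true := by
          clear ih
          funext x
          simp only [Function.update_apply]
          by_cases hx1 : x = i0 <;> by_cases hx2 : x = i <;> by_cases hx3 : x = j <;>
            simp_all
        exact heq ▸ ((ReflTransGen.single step).trans chain1)

/-- Lemma 2.3: in the Bruhat order generated by the basic decreasing moves, changing a
(not necessarily adjacent) pair `(∧,∨)` at positions `i < j` into `(∨,∧)`, or a pair
`(∨,∨)` into `(∧,∧)`, makes a weight strictly smaller. -/
theorem bruhat_long_moves {k : ℕ} (lam : Fin k → Bool) (i j : Fin k) (hij : i < j) :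
    (lam i = true → lam j = false →
      Relation.ReflTransGen (bruhatStep k)
          (Function.update (Function.update lam i false) j true) lam ∧
        Function.update (Function.update lam i false) j true ≠ lam) ∧
    (lam i = false → lam j = false →
      Relation.ReflTransGen (bruhatStep k)
          (Function.update (Function.update lam i true) j true) lam ∧
        Function.update (Function.update lam i true) j true ≠ lam) := by
  have hlt : (i:ℕ) < (j:ℕ) := hij
  constructor
  · intro hi hj
    refine ⟨swap_chain ((j:ℕ) - (i:ℕ) - 1) lam i j (by omega) hi hj, ?_⟩
    intro h
    have := congrFun h j
    simp [Function.update_self] at this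
    simp [this] at hj
  · intro hi hj
    refine ⟨up_chain ((i:ℕ) + (j:ℕ)) lam i j hlt rfl hi hj, ?_⟩
    intro h
    have := congrFun h j
    simp [Function.update_self] at this
    simp [this] at hj
end

section
/- Let n ≥ 1 and let ε : ZMod n → ({1, −1} ⊆ ℤ) be a choice of signs. Let R = ℂ[X_0, …, X_{n−1}] / I, where I is the ideal generated by X_i² for all i and by X_{i+1} − ε(i)·X_i for all i ∈ ZMod n (indices cyclic). Then the ℂ-dimension of R equals 2 if ∏_{i} ε(i) = 1, and equals 1 if ∏_{i} ε(i) = −1. -/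
/-!
In the quotient the relations give `X i = (ε 0 ⋯ ε (i - 1)) • X 0`, and going once around the
circle gives `X 0 = (∏ ε) • X 0`. If `∏ ε ≠ 1` this forces `X 0 = 0`, so every generator vanishes
and the quotient is the base field. If `∏ ε = 1` the partial products are well defined on the
circle, so `X i ↦ (ε 0 ⋯ ε (i - 1)) • x` inverts `x ↦ X 0` and the quotient is `K[x]/(x²)`.
-/

open MvPolynomial Finset

theorem ZMod.prod_range_natCast {M : Type*} [CommMonoid M] {n : ℕ} [NeZero n] (f : ZMod n → M) :
    ∏ j ∈ range n, f j = ∏ i, f i :=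
  prod_nbij' (fun j => (j : ZMod n)) ZMod.val (by simp) (by simp [ZMod.val_lt])
    (fun j hj => ZMod.val_cast_of_lt (mem_range.1 hj)) (fun i _ => ZMod.natCast_zmod_val i)
    (fun _ _ => rfl)

theorem MvPolynomial.finrank_quotient_eq_one_of_X_mem {K σ : Type*} [Field K]
    {I : Ideal (MvPolynomial σ K)} (hX : ∀ i, X i ∈ I)
    (hI : I ≤ RingHom.ker (aeval (0 : σ → K))) :
    Module.finrank K (MvPolynomial σ K ⧸ I) = 1 := by
  let e : (MvPolynomial σ K ⧸ I) ≃ₐ[K] K :=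
    AlgEquiv.ofAlgHom (Ideal.Quotient.liftₐ I (aeval 0) hI) (Algebra.ofId K _) (by ext) <| by
      refine Ideal.Quotient.algHom_ext K (MvPolynomial.algHom_ext fun i => ?_)
      simp [Ideal.Quotient.eq_zero_iff_mem.2 (hX i)]
  rw [e.toLinearEquiv.finrank_eq, Module.finrank_self]

theorem AdjoinRoot.root_X_sq_sq (R : Type*) [CommRing R] :
    root (Polynomial.X ^ 2 : Polynomial R) ^ 2 = 0 := by
  rw [← mk_X, ← map_pow, mk_self]

theorem AdjoinRoot.finrank_X_sq (K : Type*) [Field K] :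
    Module.finrank K (AdjoinRoot (Polynomial.X ^ 2 : Polynomial K)) = 2 :=
  finrank_quotient_span_eq_natDegree.trans (Polynomial.natDegree_X_pow 2)

namespace CircleRing

variable {K : Type*} [Field K] {n : ℕ} (ε : ZMod n → K)

noncomputable def circleIdeal : Ideal (MvPolynomial (ZMod n) K) :=
  Ideal.span
    ((Set.range fun i : ZMod n => (X i : MvPolynomial (ZMod n) K) ^ 2) ∪
      Set.range fun i : ZMod n => X (i + 1) - C (ε i) * X i)

local notation "mk" => Ideal.Quotient.mk (circleIdeal ε)

theorem mk_X_sq (i : ZMod n) : mk (X i) ^ 2 = 0 := by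
  rw [← map_pow, Ideal.Quotient.eq_zero_iff_mem]
  exact Ideal.subset_span (.inl ⟨i, rfl⟩)

theorem mk_X_add_one (i : ZMod n) : mk (X (i + 1)) = ε i • mk (X i) := by
  have h : X (i + 1) - C (ε i) * X i ∈ circleIdeal ε := Ideal.subset_span (.inr ⟨i, rfl⟩)
  rw [Ideal.Quotient.eq.2 h, ← smul_eq_C_mul, ← Ideal.Quotient.mkₐ_eq_mk K, map_smul]

theorem circleIdeal_le_ker_aeval_zero :
    circleIdeal ε ≤ RingHom.ker (aeval (0 : ZMod n → K)) := by
  rw [circleIdeal, Ideal.span_le]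
  rintro _ (⟨i, rfl⟩ | ⟨i, rfl⟩) <;> simp

noncomputable def partialProd (i : ZMod n) : K := ∏ j ∈ range i.val, ε j

theorem partialProd_zero : partialProd ε 0 = 1 := by simp [partialProd]

theorem mk_X_natCast (k : ℕ) : mk (X (k : ZMod n)) = (∏ j ∈ range k, ε j) • mk (X 0) := by
  induction k with
  | zero => simp
  | succ k ih => rw [Nat.cast_succ, mk_X_add_one, ih, prod_range_succ, smul_smul, mul_comm]

variable [NeZero n]

theorem partialProd_add_one (h : ∏ i, ε i = 1) (i : ZMod n) :
    partialProd ε (i + 1) = ε i * partialProd ε i := by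
  have hi : i + 1 = ((i.val + 1 : ℕ) : ZMod n) := by simp
  have hstep : ε i * partialProd ε i = ∏ j ∈ range (i.val + 1), ε j := by
    rw [partialProd, prod_range_succ, ZMod.natCast_zmod_val, mul_comm]
  rw [hstep, hi]
  obtain hlt | heq : i.val + 1 < n ∨ i.val + 1 = n := by have := ZMod.val_lt i; omega
  · rw [partialProd, ZMod.val_cast_of_lt hlt]
  · rw [heq, ZMod.natCast_self, partialProd_zero, ZMod.prod_range_natCast, h]

theorem mk_X (i : ZMod n) : mk (X i) = partialProd ε i • mk (X 0) := by
  simpa [partialProd] using mk_X_natCast ε i.val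

theorem mk_X_zero_eq_prod_smul : mk (X 0) = (∏ i, ε i) • mk (X 0) := by
  simpa [ZMod.prod_range_natCast] using mk_X_natCast ε n

theorem X_mem_circleIdeal_of_prod_ne_one (h : ∏ i, ε i ≠ 1) (i : ZMod n) :
    X i ∈ circleIdeal ε := by
  have hfix : (1 - ∏ i, ε i) • mk (X 0) = 0 := by
    rw [sub_smul, one_smul, ← mk_X_zero_eq_prod_smul, sub_self]
  rw [← Ideal.Quotient.eq_zero_iff_mem, mk_X,
    (smul_eq_zero.1 hfix).resolve_left (sub_ne_zero.2 (Ne.symm h)), smul_zero]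

theorem finrank_of_prod_ne_one (h : ∏ i, ε i ≠ 1) :
    Module.finrank K (MvPolynomial (ZMod n) K ⧸ circleIdeal ε) = 1 :=
  finrank_quotient_eq_one_of_X_mem (X_mem_circleIdeal_of_prod_ne_one ε h)
    (circleIdeal_le_ker_aeval_zero ε)

local notation "𝔻" => AdjoinRoot (Polynomial.X ^ 2 : Polynomial K)

noncomputable def toDualNumbers (h : ∏ i, ε i = 1) :
    (MvPolynomial (ZMod n) K ⧸ circleIdeal ε) →ₐ[K] 𝔻 :=
  Ideal.Quotient.liftₐ _ (aeval fun i => partialProd ε i • AdjoinRoot.root _) fun a ha => by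
    refine (show circleIdeal ε ≤ RingHom.ker _ from ?_) ha
    rw [circleIdeal, Ideal.span_le]
    rintro _ (⟨i, rfl⟩ | ⟨i, rfl⟩)
    · simp [smul_pow, AdjoinRoot.root_X_sq_sq]
    · simp [partialProd_add_one ε h, Algebra.smul_def]
      ring

theorem toDualNumbers_mk_X (h : ∏ i, ε i = 1) (i : ZMod n) :
    toDualNumbers ε h (mk (X i)) = partialProd ε i • AdjoinRoot.root _ :=
  aeval_X _ i

noncomputable def ofDualNumbers : 𝔻 →ₐ[K] (MvPolynomial (ZMod n) K ⧸ circleIdeal ε) :=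
  AdjoinRoot.liftAlgHom _ (Algebra.ofId K _) (mk (X 0)) (by simpa using mk_X_sq ε 0)

noncomputable def equivDualNumbers (h : ∏ i, ε i = 1) :
    (MvPolynomial (ZMod n) K ⧸ circleIdeal ε) ≃ₐ[K] 𝔻 :=
  AlgEquiv.ofAlgHom (toDualNumbers ε h) (ofDualNumbers ε)
    (AdjoinRoot.algHom_ext (by simp [ofDualNumbers, toDualNumbers_mk_X, partialProd_zero]))
    (Ideal.Quotient.algHom_ext K (MvPolynomial.algHom_ext fun i => by
      simp [ofDualNumbers, toDualNumbers_mk_X, partialProd_zero, mk_X ε i]))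

theorem finrank_of_prod_eq_one (h : ∏ i, ε i = 1) :
    Module.finrank K (MvPolynomial (ZMod n) K ⧸ circleIdeal ε) = 2 := by
  rw [(equivDualNumbers ε h).toLinearEquiv.finrank_eq, AdjoinRoot.finrank_X_sq]

end CircleRing

open CircleRing in
/-- The algebraic model of a single circle: for signs `ε i ∈ {1, -1}`, the quotient of
`ℂ[X_i : i ∈ ZMod n]` by the ideal generated by all `X_i ^ 2` and all
`X_{i+1} - ε i · X_i` has `ℂ`-dimension `2` if `∏ ε i = 1` and `1` if `∏ ε i = -1`. -/
theorem circle_ring_dimension (n : ℕ) (hn : 1 ≤ n) (ε : ZMod n → ℤ) :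
    haveI : NeZero n := ⟨by omega⟩
    Module.finrank ℂ
        (MvPolynomial (ZMod n) ℂ ⧸
          Ideal.span
            ((Set.range fun i : ZMod n =>
                (MvPolynomial.X i : MvPolynomial (ZMod n) ℂ) ^ 2) ∪
              (Set.range fun i : ZMod n =>
                MvPolynomial.X (i + 1) -
                  MvPolynomial.C ((ε i : ℂ)) * MvPolynomial.X i))) =
      if (∏ i, ε i) = 1 then 2 else 1 := by
  have : NeZero n := ⟨by omega⟩
  split_ifs with h
  · exact finrank_of_prod_eq_one (fun i => (ε i : ℂ)) (by exact_mod_cast h)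
  · exact finrank_of_prod_ne_one (fun i => (ε i : ℂ)) (by exact_mod_cast h)
end

section
/- Let k ≥ 2, let P be a set of pairwise disjoint 2-element subsets of Fin k with decoration d_P : P → Bool, and let R = Fin k \ ⋃P with decoration d_R : R → Bool. Let λ₀ : Bool^k be the minimal orientation: for each undotted pair {i<j} ∈ P set λ₀ i = ∨ and λ₀ j = ∧; for each dotted pair set both entries to ∧; set λ₀ i = ∨ on undotted points of R and λ₀ i = ∧ on dotted points of R. For any subset S ⊆ P let μ_S be obtained from λ₀ by reversing each cup in S (undotted cup {i<j}: change (∨,∧) to (∧,∨); dotted cup: change (∧,∧) to (∨,∨)). Then λ₀ ≤ μ_S in the Bruhat order on Bool^k generated by the decreasing moves 'adjacent (∧,∨) ↦ (∨,∧)' and '(∨,∨) at positions (1,2) ↦ (∧,∧)'. -/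
namespace BruhatAux

variable {k : ℕ}

/-- forward move M1: `(∨,∧)` at `(i,i+1)` becomes `(∧,∨)` (T moves left). -/
lemma step1 (a : Fin k → Bool) (i j : Fin k) (hij : (i:ℕ)+1 = j)
    (hi : a i = false) (hj : a j = true) :
    bruhatStep k a (Function.update (Function.update a i true) j false) := by
  have hne : i ≠ j := Fin.ne_of_val_ne (by omega)
  left
  refine ⟨i, j, hij, ?_, ?_, ?_⟩
  · simp [Function.update_apply, hne]
  · simp [Function.update_apply]
  · funext x
    simp only [Function.update_apply]
    split_ifs <;> simp_all

/-- forward move M2: `(∧,∧)` at `(0,1)` becomes `(∨,∨)`. -/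
lemma step2 (a : Fin k → Bool) (i j : Fin k) (hi0 : (i:ℕ) = 0) (hj1 : (j:ℕ) = 1)
    (hi : a i = true) (hj : a j = true) :
    bruhatStep k a (Function.update (Function.update a i false) j false) := by
  have hne : i ≠ j := Fin.ne_of_val_ne (by omega)
  right
  refine ⟨i, j, hi0, hj1, ?_, ?_, ?_⟩
  · simp [Function.update_apply, hne]
  · simp [Function.update_apply]
  · funext x
    simp only [Function.update_apply]
    split_ifs <;> simp_all

/-- Lemma U: swap `(∨,...,∧)` at positions `i < j` to `(∧,...,∨)`, middle unchanged. -/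
lemma lemU : ∀ n (a : Fin k → Bool) (i j : Fin k), (j:ℕ) - i = n → (i:ℕ) < j →
    a i = false → a j = true →
    Relation.ReflTransGen (bruhatStep k) a
      (Function.update (Function.update a i true) j false) := by
  intro n
  induction n using Nat.strong_induction_on with
  | _ n IH =>
  intro a i j hn hij hi hj
  have hne : i ≠ j := Fin.ne_of_val_ne (by omega)
  rcases eq_or_lt_of_le (Nat.succ_le_of_lt hij) with heq | hlt
  · exact Relation.ReflTransGen.single (step1 a i j heq hi hj)
  · -- let m = i+1 < j
    have hmk : (i:ℕ)+1 < k := lt_trans hlt j.isLt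
    set m : Fin k := ⟨(i:ℕ)+1, hmk⟩ with hm
    have him : i ≠ m := Fin.ne_of_val_ne (by simp [hm])
    have hmj : m ≠ j := Fin.ne_of_val_ne (by simp [hm]; omega)
    rcases Bool.eq_false_or_eq_true (a m) with ham | ham
    swap
    · -- a m = false : first recurse on (m, j), then one step at (i, m)
      have h1 := IH ((j:ℕ) - m) (by simp [hm]; omega) a m j rfl (by simp [hm]; omega) ham hj
      set c := Function.update (Function.update a m true) j false with hc
      have hci : c i = false := by simp [hc, Function.update_apply, hne, him.symm]; simp_all
      have hcm : c m = true := by simp [hc, Function.update_apply, hmj]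
      have h2 := step1 c i m (by simp [hm]) hci hcm
      have he : Function.update (Function.update c i true) m false
          = Function.update (Function.update a i true) j false := by
        funext x
        simp only [hc, Function.update_apply]
        split_ifs <;> simp_all
      rw [he] at h2
      exact h1.trans (Relation.ReflTransGen.single h2)
    · -- a m = true : one step at (i,m), then recurse on (m, j)
      have h2 := step1 a i m (by simp [hm]) hi ham
      set c := Function.update (Function.update a i true) m false with hc
      have hcm : c m = false := by simp [hc, Function.update_apply, him.symm]
      have hcj : c j = true := by simp [hc, Function.update_apply, hmj.symm, hne.symm]; simp_all
      have h1 := IH ((j:ℕ) - m) (by simp [hm]; omega) c m j rfl (by simp [hm]; omega) hcm hcj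
      refine Relation.ReflTransGen.head h2 (h1.trans ?_)
      have : Function.update (Function.update c m true) j false
          = Function.update (Function.update a i true) j false := by
        funext x
        simp only [hc, Function.update_apply]
        split_ifs <;> simp_all
      rw [this]


/-- Lemma D: kill `(∧,∧)` at positions `i < j`, turning both to `∨`, middle unchanged. -/
lemma lemD : ∀ n (a : Fin k → Bool) (i j : Fin k), (i:ℕ) = n → (i:ℕ) < j →
    a i = true → a j = true →
    Relation.ReflTransGen (bruhatStep k) a
      (Function.update (Function.update a i false) j false) := by
  intro n
  induction n using Nat.strong_induction_on with
  | _ n IH =>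
  intro a i j hn hij hi hj
  have hne : i ≠ j := Fin.ne_of_val_ne (by omega)
  rcases Nat.eq_zero_or_pos (i:ℕ) with hi0 | hipos
  · -- i at position 0
    rcases eq_or_lt_of_le (Nat.succ_le_of_lt hij) with heq | hlt
    · -- j at position 1 : single M2 step
      exact Relation.ReflTransGen.single (step2 a i j hi0 (by omega) hi hj)
    · -- j beyond position 1; let o be position 1
      have hok : (1:ℕ) < k := lt_trans (by omega) j.isLt
      set o : Fin k := ⟨1, hok⟩ with ho
      have hio : i ≠ o := Fin.ne_of_val_ne (by simp [ho]; omega)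
      have hoj : o ≠ j := Fin.ne_of_val_ne (by simp [ho]; omega)
      rcases Bool.eq_false_or_eq_true (a o) with hao | hao
      · -- a o = true : M2 at (i,o), then lemU at (o, j)
        have h2 := step2 a i o hi0 (by simp [ho]) hi hao
        set c := Function.update (Function.update a i false) o false with hc
        have hco : c o = false := by simp [hc, Function.update_apply]
        have hcj : c j = true := by
          simp [hc, Function.update_apply, hoj.symm, hne.symm]; simp_all
        have h1 := lemU ((j:ℕ) - o) c o j rfl (by simp [ho]; omega) hco hcj
        have he : Function.update (Function.update c o true) j false
            = Function.update (Function.update a i false) j false := by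
          funext x
          simp only [hc, Function.update_apply]
          split_ifs <;> simp_all
        rw [he] at h1
        exact Relation.ReflTransGen.head h2 h1
      · -- a o = false : lemU at (o,j), then M2 at (i,o)
        have h1 := lemU ((j:ℕ) - o) a o j rfl (by simp [ho]; omega) hao hj
        set c := Function.update (Function.update a o true) j false with hc
        have hci : c i = true := by
          simp [hc, Function.update_apply, hne, hio]; simp_all
        have hco : c o = true := by simp [hc, Function.update_apply, hoj]
        have h2 := step2 c i o hi0 (by simp [ho]) hci hco
        have he : Function.update (Function.update c i false) o false
            = Function.update (Function.update a i false) j false := by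
          funext x
          simp only [hc, Function.update_apply]
          split_ifs <;> simp_all
        rw [he] at h2
        exact h1.trans (Relation.ReflTransGen.single h2)
  · -- i > 0 ; let h be position i-1
    have hhk : (i:ℕ) - 1 < k := lt_trans (by omega) i.isLt
    set g : Fin k := ⟨(i:ℕ)-1, hhk⟩ with hg
    have hgi : g ≠ i := Fin.ne_of_val_ne (by simp [hg]; omega)
    have hgj : g ≠ j := Fin.ne_of_val_ne (by simp [hg]; omega)
    rcases Bool.eq_false_or_eq_true (a g) with hag | hag
    · -- a g = true : kill (g, i) by IH, then lemU at (g, j)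
      have h2 := IH ((g:ℕ)) (by simp [hg]; omega) a g i rfl (by simp [hg]; omega) hag hi
      set c := Function.update (Function.update a g false) i false with hc
      have hcg : c g = false := by simp [hc, Function.update_apply, hgi]
      have hcj : c j = true := by
        simp [hc, Function.update_apply, hgj.symm, hne.symm]; simp_all
      have h1 := lemU ((j:ℕ) - g) c g j rfl (by simp [hg]; omega) hcg hcj
      have he : Function.update (Function.update c g true) j false
          = Function.update (Function.update a i false) j false := by
        funext x
        simp only [hc, Function.update_apply]
        split_ifs <;> simp_all
      rw [he] at h1
      exact h2.trans h1
    · -- a g = false : M1 at (g, i) (T moves left), then IH kills (g, j)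
      have h2 := step1 a g i (by simp [hg]; omega) hag hi
      set c := Function.update (Function.update a g true) i false with hc
      have hcg : c g = true := by simp [hc, Function.update_apply, hgi]
      have hcj : c j = true := by
        simp [hc, Function.update_apply, hgj.symm, hne.symm]; simp_all
      have h1 := IH ((g:ℕ)) (by simp [hg]; omega) c g j rfl (by simp [hg]; omega) hcg hcj
      have he : Function.update (Function.update c g false) j false
          = Function.update (Function.update a i false) j false := by
        funext x
        simp only [hc, Function.update_apply]
        split_ifs <;> simp_all
      rw [he] at h1
      exact Relation.ReflTransGen.head h2 h1


lemma main_aux {k : ℕ}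
    (P : Finset (Finset (Fin k)))
    (hcard : ∀ p ∈ P, p.card = 2)
    (hdisj : ∀ p ∈ P, ∀ q ∈ P, p ≠ q → Disjoint p q)
    (dP : Finset (Fin k) → Bool)
    (lam0 : Fin k → Bool)
    (hlam0P : ∀ p ∈ P, ∀ i ∈ p, ∀ j ∈ p, i < j →
      (dP p = false → lam0 i = false ∧ lam0 j = true) ∧
      (dP p = true → lam0 i = true ∧ lam0 j = true))
    (S : Finset (Finset (Fin k))) (hS : S ⊆ P) :
    ∀ mu : Fin k → Bool,
    (∀ p ∈ S, ∀ i ∈ p, ∀ j ∈ p, i < j →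
      (dP p = false → mu i = true ∧ mu j = false) ∧
      (dP p = true → mu i = false ∧ mu j = false)) →
    (∀ p ∈ P, p ∉ S → ∀ i ∈ p, mu i = lam0 i) →
    (∀ i ∈ Finset.univ \ P.biUnion id, mu i = lam0 i) →
    Relation.ReflTransGen (bruhatStep k) lam0 mu := by
  classical
  induction S using Finset.induction_on with
  | empty =>
    intro mu _ hmuP hmuR
    have : mu = lam0 := by
      funext x
      by_cases hx : x ∈ P.biUnion id
      · obtain ⟨p, hp, hxp⟩ := Finset.mem_biUnion.1 hx
        exact hmuP p hp (Finset.notMem_empty p) x hxp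
      · exact hmuR x (Finset.mem_sdiff.2 ⟨Finset.mem_univ x, hx⟩)
    rw [this]
  | @insert p S' hpS' IH =>
    intro mu hmuS hmuP hmuR
    have hSP' : S' ⊆ P := fun q hq => hS (Finset.mem_insert_of_mem hq)
    have hpP : p ∈ P := hS (Finset.mem_insert_self p S')
    -- extract the two elements i < j of p
    obtain ⟨u, v, huv, hp2⟩ := Finset.card_eq_two.1 (hcard p hpP)
    obtain ⟨i, j, hij, hpij⟩ : ∃ i j : Fin k, i < j ∧ p = {i, j} := by
      rcases lt_or_gt_of_ne huv with h | h
      · exact ⟨u, v, h, hp2⟩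
      · exact ⟨v, u, h, by rw [hp2]; exact Finset.pair_comm u v⟩
    have hne : i ≠ j := ne_of_lt hij
    have hip : i ∈ p := by rw [hpij]; simp
    have hjp : j ∈ p := by rw [hpij]; simp
    -- intermediate weight : mu reset to lam0 on p
    set mu' : Fin k → Bool :=
      Function.update (Function.update mu i (lam0 i)) j (lam0 j) with hmu'
    have hmu'i : mu' i = lam0 i := by simp [hmu', Function.update_apply, hne]
    have hmu'j : mu' j = lam0 j := by simp [hmu', Function.update_apply]
    have hmu'off : ∀ x : Fin k, x ∉ p → mu' x = mu x := by
      intro x hx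
      have hxi : x ≠ i := fun h => hx (h ▸ hip)
      have hxj : x ≠ j := fun h => hx (h ▸ hjp)
      simp [hmu', Function.update_apply, hxi, hxj]
    -- lam0 →* mu'
    have hstep1 : Relation.ReflTransGen (bruhatStep k) lam0 mu' := by
      apply IH hSP'
      · intro q hq x hx y hy hxy
        have hqS : q ∈ insert p S' := Finset.mem_insert_of_mem hq
        have hqp : q ≠ p := fun h => hpS' (h ▸ hq)
        have hd : Disjoint q p := hdisj q (hSP' hq) p hpP hqp
        have hxn : x ∉ p := Finset.disjoint_left.1 hd hx
        have hyn : y ∉ p := Finset.disjoint_left.1 hd hy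
        rw [hmu'off x hxn, hmu'off y hyn]
        exact hmuS q hqS x hx y hy hxy
      · intro q hq hqS' x hx
        by_cases hqp : q = p
        · subst hqp
          rcases Finset.mem_insert.1 (hpij ▸ hx : x ∈ ({i, j} : Finset (Fin k))) with h | h
          · rw [h]; exact hmu'i
          · rw [Finset.mem_singleton.1 h]; exact hmu'j
        · have hd : Disjoint q p := hdisj q hq p hpP hqp
          rw [hmu'off x (Finset.disjoint_left.1 hd hx)]
          exact hmuP q hq (by simp [Finset.mem_insert, hqp, hqS']) x hx
      · intro x hx
        have hxp : x ∉ p := by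
          intro hxp
          have := Finset.mem_sdiff.1 hx
          exact this.2 (Finset.mem_biUnion.2 ⟨p, hpP, hxp⟩)
        rw [hmu'off x hxp]
        exact hmuR x hx
    -- mu' →* mu by reversing the cup p
    have hval := hlam0P p hpP i hip j hjp hij
    have hmuval := hmuS p (Finset.mem_insert_self p S') i hip j hjp hij
    have hstep2 : Relation.ReflTransGen (bruhatStep k) mu' mu := by
      rcases Bool.eq_false_or_eq_true (dP p) with hdp | hdp
      · -- dotted cup
        obtain ⟨hl0i, hl0j⟩ := hval.2 hdp
        obtain ⟨hmi, hmj⟩ := hmuval.2 hdp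
        have h := lemD ((i:ℕ)) mu' i j rfl hij (hmu'i.trans hl0i) (hmu'j.trans hl0j)
        have he : Function.update (Function.update mu' i false) j false = mu := by
          funext x
          by_cases hxj : x = j
          · subst hxj; simp [hmj]
          · by_cases hxi : x = i
            · subst hxi; simp [Function.update_apply, hne, hmi]
            · have : x ∉ p := by rw [hpij]; simp [hxi, hxj]
              simp [Function.update_apply, hxi, hxj, hmu'off x this]
        rwa [he] at h
      · -- undotted cup
        obtain ⟨hl0i, hl0j⟩ := hval.1 hdp
        obtain ⟨hmi, hmj⟩ := hmuval.1 hdp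
        have h := lemU ((j:ℕ) - i) mu' i j rfl hij (hmu'i.trans hl0i) (hmu'j.trans hl0j)
        have he : Function.update (Function.update mu' i true) j false = mu := by
          funext x
          by_cases hxj : x = j
          · subst hxj; simp [hmj]
          · by_cases hxi : x = i
            · subst hxi; simp [Function.update_apply, hne, hmi]
            · have : x ∉ p := by rw [hpij]; simp [hxi, hxj]
              simp [Function.update_apply, hxi, hxj, hmu'off x this]
        rwa [he] at h
    exact hstep1.trans hstep2

end BruhatAux

/-- Lemma 3.11(1): the minimal orientation `λ₀` of a decorated cup diagram (cups `P` with
decoration `dP`, rays on the complement decorated by `dR`) is below every orientation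
`μ_S` obtained from `λ₀` by reversing the cups in a subset `S ⊆ P`, in the Bruhat order
generated by the basic decreasing moves. -/
theorem minimal_orientation_le {k : ℕ} (hk : 2 ≤ k)
    (P : Finset (Finset (Fin k)))
    (hcard : ∀ p ∈ P, p.card = 2)
    (hdisj : ∀ p ∈ P, ∀ q ∈ P, p ≠ q → Disjoint p q)
    (dP : Finset (Fin k) → Bool) (dR : Fin k → Bool)
    (lam0 : Fin k → Bool)
    (hlam0P : ∀ p ∈ P, ∀ i ∈ p, ∀ j ∈ p, i < j →
      (dP p = false → lam0 i = false ∧ lam0 j = true) ∧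
      (dP p = true → lam0 i = true ∧ lam0 j = true))
    (hlam0R : ∀ i ∈ Finset.univ \ P.biUnion id, lam0 i = dR i)
    (S : Finset (Finset (Fin k))) (hS : S ⊆ P)
    (mu : Fin k → Bool)
    (hmuS : ∀ p ∈ S, ∀ i ∈ p, ∀ j ∈ p, i < j →
      (dP p = false → mu i = true ∧ mu j = false) ∧
      (dP p = true → mu i = false ∧ mu j = false))
    (hmuP : ∀ p ∈ P, p ∉ S → ∀ i ∈ p, mu i = lam0 i)
    (hmuR : ∀ i ∈ Finset.univ \ P.biUnion id, mu i = lam0 i) :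
    Relation.ReflTransGen (bruhatStep k) lam0 mu := by
  exact BruhatAux.main_aux P hcard hdisj dP lam0 hlam0P S hS mu hmuS hmuP hmuR
end
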